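/- Let (V, ‖·‖) be a normed real vector space with d(x,y) = ‖x − y‖. If V is C-rCAT(0) for some C > 0, then V is CAT(0); consequently V is rCAT(0) if and only if it is an inner product space of nonpositive curvature (CAT(0)). -/

import Mathlib

/-!
Straight segments are short segments, so `RCAT0 V C` compares the median of every triangle
with the median of its Euclidean comparison triangle up to `C`. Dilating the triangle by `R`
multiplies both medians by `R` and leaves `C` fixed; letting `R → ∞` gives the exact
comparison, which for the affine midpoint is the parallelogram law. So `V` is an inner product
space (Jordan–von Neumann), where metric midpoints are affine and the CN inequality is
Apollonius' identity.

Conversely, in an inner product space a point of an `h`-short segment with `h ≤ 1` and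
`h * dist x y ≤ 1` lies within `2` of the point of the straight segment with the same comparison
point, and straight-line triangles are congruent to their comparison triangles, so
`RCAT0 V 4` holds.
-/

open Set

variable {X : Type*} [MetricSpace X]

/-- An `h`-short segment from `x` to `y`: a path whose length exceeds
`dist x y` by at most `h`. -/
def IsShortSegment (γ : ℝ → X) (x y : X) (L h : ℝ) : Prop :=
  0 ≤ L ∧ ContinuousOn γ (Icc 0 L) ∧ γ 0 = x ∧ γ L = y ∧
    eVariationOn γ (Icc 0 L) ≤ ENNReal.ofReal (dist x y + h)

/-- The standard short function `h = 1/max(1, d(x,y), d(x,z), d(y,z))`. -/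
noncomputable def stdShort (x y z : X) : ℝ :=
  1 / max 1 (max (dist x y) (max (dist x z) (dist y z)))

/-- A Euclidean comparison triangle for the triple `x, y, z`. -/
def IsComparisonTriangle (x y z : X) (a b c : EuclideanSpace ℝ (Fin 2)) : Prop :=
  dist a b = dist x y ∧ dist b c = dist y z ∧ dist c a = dist z x

/-- `ū` is a comparison point on the comparison side `[ā, b̄]` for the point
`γ t` of an `h`-short segment `γ : [0,L] → X`. -/
def IsComparisonPoint (γ : ℝ → X) (L t : ℝ)
    (a b u : EuclideanSpace ℝ (Fin 2)) : Prop :=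
  u ∈ segment ℝ a b ∧
    ENNReal.ofReal (dist a u) ≤ eVariationOn γ (Icc 0 t) ∧
    ENNReal.ofReal (dist u b) ≤ eVariationOn γ (Icc t L)

/-- The `C`-rCAT(0) condition with the standard short function: every
`h`-short triangle satisfies the Euclidean comparison inequality up to the
additive constant `C`, for points `u, v` on different sides. -/
def RCAT0 (X : Type*) [MetricSpace X] (C : ℝ) : Prop :=
  ∀ x y z : X, ∀ γ₁ γ₂ γ₃ : ℝ → X, ∀ L₁ L₂ L₃ : ℝ,
    IsShortSegment γ₁ x y L₁ (stdShort x y z) →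
    IsShortSegment γ₂ y z L₂ (stdShort x y z) →
    IsShortSegment γ₃ z x L₃ (stdShort x y z) →
    ∀ a b c : EuclideanSpace ℝ (Fin 2), IsComparisonTriangle x y z a b c →
      ∀ s ∈ Icc (0:ℝ) L₁, ∀ t ∈ Icc (0:ℝ) L₂,
        ∀ u v : EuclideanSpace ℝ (Fin 2),
          IsComparisonPoint γ₁ L₁ s a b u → IsComparisonPoint γ₂ L₂ t b c v →
            dist (γ₁ s) (γ₂ t) ≤ dist u v + C

/-- The CAT(0) condition, via the CN inequality of Bruhat and Tits (equivalent
to CAT(0) for geodesic spaces, and to being an inner product space for normed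
vector spaces). -/
def CAT0CN (X : Type*) [MetricSpace X] : Prop :=
  ∀ x y z m : X, dist y m = dist y z / 2 → dist m z = dist y z / 2 →
    2 * dist x m ^ 2 + dist y z ^ 2 / 2 ≤ dist x y ^ 2 + dist x z ^ 2

open AffineMap

theorem stdShort_nonneg (x y z : X) : 0 ≤ stdShort x y z := by
  unfold stdShort; positivity

theorem mul_stdShort_le_one {x y z : X} {d : ℝ}
    (hd : d ≤ max 1 (max (dist x y) (max (dist x z) (dist y z)))) :
    d * stdShort x y z ≤ 1 := by
  unfold stdShort
  rw [mul_one_div, div_le_one (one_pos.trans_le (le_max_left _ _))]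
  exact hd

theorem exists_isComparisonTriangle (x y z : X) :
    ∃ a b c : EuclideanSpace ℝ (Fin 2), IsComparisonTriangle x y z a b c := by
  set d₁ := dist x y
  set d₂ := dist y z
  set d₃ := dist z x
  have t₁ : d₂ ≤ d₁ + d₃ := by linarith [dist_triangle y x z, dist_comm x y, dist_comm z x]
  have t₂ : d₃ ≤ d₁ + d₂ := by linarith [dist_triangle z y x, dist_comm z y, dist_comm y x]
  have t₃ : d₁ ≤ d₂ + d₃ := by linarith [dist_triangle x z y, dist_comm x z, dist_comm z y]
  have h₁ : 0 ≤ d₁ := dist_nonneg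
  have h₃ : 0 ≤ d₃ := dist_nonneg
  -- The vertex `c = (p, q)` comes from the law of cosines; if `d₁ = 0` then `p = 0` (division
  -- by zero) and the construction still works, since then `d₂ = d₃`.
  set p := (d₁ ^ 2 + d₃ ^ 2 - d₂ ^ 2) / (2 * d₁)
  have hp : 2 * d₁ * p = d₁ ^ 2 + d₃ ^ 2 - d₂ ^ 2 := by
    rcases eq_or_ne d₁ 0 with h | h
    · have : d₂ = d₃ := by linarith
      simp [h, this]
    · exact mul_div_cancel₀ _ (mul_ne_zero two_ne_zero h)
  have hp₃ : p ^ 2 ≤ d₃ ^ 2 := by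
    rcases eq_or_lt_of_le h₁ with h | h
    · simp [p, ← h]; positivity
    · refine sq_le_sq' ?_ ?_ <;> nlinarith
  set q := √(d₃ ^ 2 - p ^ 2)
  have hq : q ^ 2 = d₃ ^ 2 - p ^ 2 := Real.sq_sqrt (by linarith)
  refine ⟨!₂[0, 0], !₂[d₁, 0], !₂[p, q], ?_, ?_, ?_⟩ <;>
    simp only [EuclideanSpace.dist_eq, Fin.sum_univ_two, Real.dist_eq, sq_abs,
      Matrix.cons_val_zero, Matrix.cons_val_one]
  · rw [show (0 - d₁) ^ 2 + (0 - 0) ^ 2 = d₁ ^ 2 by ring, Real.sqrt_sq h₁]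
  · rw [show (d₁ - p) ^ 2 + (0 - q) ^ 2 = d₂ ^ 2 by linear_combination hq - hp,
      Real.sqrt_sq dist_nonneg]
  · rw [show (p - 0) ^ 2 + (q - 0) ^ 2 = d₃ ^ 2 by linear_combination hq, Real.sqrt_sq h₃]

namespace IsShortSegment

variable {γ : ℝ → X} {x y : X} {L h s : ℝ}

theorem ofReal_dist_left_le (hγ : IsShortSegment γ x y L h) (hs : 0 ≤ s) :
    ENNReal.ofReal (dist x (γ s)) ≤ eVariationOn γ (Icc 0 s) := by
  rw [← hγ.2.2.1, ← edist_dist]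
  exact eVariationOn.edist_le γ (left_mem_Icc.2 hs) (right_mem_Icc.2 hs)

theorem ofReal_dist_right_le (hγ : IsShortSegment γ x y L h) (hs : s ≤ L) :
    ENNReal.ofReal (dist (γ s) y) ≤ eVariationOn γ (Icc s L) := by
  rw [← hγ.2.2.2.1, ← edist_dist]
  exact eVariationOn.edist_le γ (left_mem_Icc.2 hs) (right_mem_Icc.2 hs)

theorem add_le_of_le_eVariationOn (hγ : IsShortSegment γ x y L h) (hh : 0 ≤ h)
    (hs : s ∈ Icc 0 L) {r₁ r₂ : ℝ} (hr₁ : 0 ≤ r₁) (hr₂ : 0 ≤ r₂)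
    (h₁ : ENNReal.ofReal r₁ ≤ eVariationOn γ (Icc 0 s))
    (h₂ : ENNReal.ofReal r₂ ≤ eVariationOn γ (Icc s L)) :
    r₁ + r₂ ≤ dist x y + h := by
  have hsplit : eVariationOn γ (Icc 0 s) + eVariationOn γ (Icc s L) =
      eVariationOn γ (Icc 0 L) := by
    have := eVariationOn.Icc_add_Icc γ hs.1 hs.2 hs
    rwa [Icc_inter_Icc, Icc_inter_Icc, Icc_inter_Icc, max_self, min_eq_right hs.2,
      max_eq_right hs.1, min_self] at this
  rw [← ENNReal.ofReal_le_ofReal_iff (by positivity), ENNReal.ofReal_add hr₁ hr₂]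
  calc ENNReal.ofReal r₁ + ENNReal.ofReal r₂
      ≤ eVariationOn γ (Icc 0 s) + eVariationOn γ (Icc s L) := add_le_add h₁ h₂
    _ = eVariationOn γ (Icc 0 L) := hsplit
    _ ≤ ENNReal.ofReal (dist x y + h) := hγ.2.2.2.2

theorem dist_add_dist_le (hγ : IsShortSegment γ x y L h) (hh : 0 ≤ h) (hs : s ∈ Icc 0 L) :
    dist x (γ s) + dist (γ s) y ≤ dist x y + h :=
  hγ.add_le_of_le_eVariationOn hh hs dist_nonneg dist_nonneg (hγ.ofReal_dist_left_le hs.1)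
    (hγ.ofReal_dist_right_le hs.2)

theorem abs_dist_sub_dist_le {a b u : EuclideanSpace ℝ (Fin 2)}
    (hγ : IsShortSegment γ x y L h) (hh : 0 ≤ h) (hs : s ∈ Icc 0 L)
    (hab : dist a b = dist x y) (hu : IsComparisonPoint γ L s a b u) :
    |dist x (γ s) - dist a u| ≤ h := by
  have hau : dist a u + dist u b = dist a b := dist_add_dist_of_mem_segment hu.1
  have h₁ := hγ.add_le_of_le_eVariationOn hh hs dist_nonneg dist_nonneg
    (hγ.ofReal_dist_left_le hs.1) hu.2.2
  have h₂ := hγ.add_le_of_le_eVariationOn hh hs dist_nonneg dist_nonneg hu.2.1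
    (hγ.ofReal_dist_right_le hs.2)
  rw [abs_le]
  constructor <;> linarith [dist_triangle x (γ s) y]

end IsShortSegment

section InnerProductSpace

variable {V W : Type*} [NormedAddCommGroup V] [InnerProductSpace ℝ V]
  [NormedAddCommGroup W] [InnerProductSpace ℝ W]

theorem dist_lineMap_sq (x y p : V) (θ : ℝ) :
    dist (lineMap x y θ) p ^ 2 =
      (1 - θ) * dist x p ^ 2 + θ * dist y p ^ 2 - θ * (1 - θ) * dist x y ^ 2 := by
  have hp : lineMap x y θ - p = (1 - θ) • (x - p) + θ • (y - p) := by
    rw [lineMap_apply_module]; module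
  have hxy : x - y = (x - p) - (y - p) := by abel
  simp only [dist_eq_norm]
  rw [hp, hxy, norm_add_sq_real, norm_sub_sq_real (x - p) (y - p), real_inner_smul_left,
    real_inner_smul_right, norm_smul, norm_smul, mul_pow, mul_pow, Real.norm_eq_abs,
    Real.norm_eq_abs, sq_abs, sq_abs]
  ring

theorem dist_lineMap_lineMap_sq (x y z : V) (θ ρ : ℝ) :
    dist (lineMap x y θ) (lineMap y z ρ) ^ 2 =
      (1 - ρ) * (‖1 - θ‖ * dist x y) ^ 2 +
        ρ * ((1 - θ) * dist x z ^ 2 + θ * dist y z ^ 2 - θ * (1 - θ) * dist x y ^ 2) -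
          ρ * (1 - ρ) * dist y z ^ 2 := by
  rw [dist_comm, dist_lineMap_sq, dist_comm y, dist_lineMap_right, dist_comm z,
    dist_lineMap_sq]

theorem dist_lineMap_lineMap_eq_of_dist_eq {x y z : V} {a b c : W}
    (hab : dist a b = dist x y) (hbc : dist b c = dist y z) (hca : dist c a = dist z x)
    (θ ρ : ℝ) :
    dist (lineMap a b θ) (lineMap b c ρ) = dist (lineMap x y θ) (lineMap y z ρ) := by
  rw [← sq_eq_sq₀ dist_nonneg dist_nonneg, dist_lineMap_lineMap_sq, dist_lineMap_lineMap_sq,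
    hab, hbc, dist_comm a, hca, dist_comm z]

theorem dist_lineMap_sq_le {x y p : V} {θ h : ℝ} (hθ : θ ∈ Icc (0 : ℝ) 1)
    (h₁ : |dist x p - θ * dist x y| ≤ h) (h₂ : dist x p + dist p y ≤ dist x y + h) :
    dist (lineMap x y θ) p ^ 2 ≤ 2 * h * (dist x y + h) := by
  set α := dist x p
  set β := dist y p
  set D := dist x y
  have hβ : dist p y = β := dist_comm p y
  rw [hβ] at h₂
  have hα : (α - θ * D) ^ 2 ≤ h ^ 2 := sq_le_sq' (abs_le.1 h₁).1 (abs_le.1 h₁).2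
  have e₁ : 0 ≤ α + β - D := by linarith [dist_triangle x p y, hβ]
  have e₂ : 0 ≤ β + D - α := by linarith [dist_triangle x y p]
  have e₃ : θ * (α + β - D) ≤ h := by nlinarith [hθ.1, hθ.2]
  have e₄ : β + D - α ≤ 2 * D + h := by linarith [(dist_nonneg : 0 ≤ α)]
  have e₅ : θ * (α + β - D) * (β + D - α) ≤ h * (2 * D + h) :=
    mul_le_mul e₃ e₄ e₂ ((abs_nonneg _).trans h₁)
  -- Stewart's identity, regrouped so that each term is controlled by `h`.
  calc dist (lineMap x y θ) p ^ 2 = (α - θ * D) ^ 2 + θ * (α + β - D) * (β + D - α) := by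
        rw [dist_lineMap_sq]; ring
    _ ≤ 2 * h * (D + h) := by linarith

theorem IsShortSegment.dist_lineMap_le_two {γ : ℝ → V} {x y : V} {L h s θ : ℝ}
    {a b : EuclideanSpace ℝ (Fin 2)} (hγ : IsShortSegment γ x y L h) (hh : 0 ≤ h)
    (hh₁ : h ≤ 1) (hDh : dist x y * h ≤ 1) (hs : s ∈ Icc 0 L) (hθ : θ ∈ Icc (0 : ℝ) 1)
    (hab : dist a b = dist x y) (hu : IsComparisonPoint γ L s a b (lineMap a b θ)) :
    dist (lineMap x y θ) (γ s) ≤ 2 := by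
  have hclose := hγ.abs_dist_sub_dist_le hh hs hab hu
  rw [dist_left_lineMap, Real.norm_of_nonneg hθ.1, hab] at hclose
  have hsq := dist_lineMap_sq_le hθ hclose (hγ.dist_add_dist_le hh hs)
  nlinarith [dist_nonneg (x := lineMap x y θ) (y := γ s)]

theorem rcat0_of_innerProductSpace : RCAT0 V 4 := by
  intro x y z γ₁ γ₂ _ L₁ L₂ _ h₁ h₂ _ a b c hT s hs t ht u v hu hv
  obtain ⟨θ, hθ, rfl⟩ : ∃ θ ∈ Icc (0 : ℝ) 1, lineMap a b θ = u := by
    simpa [segment_eq_image_lineMap] using hu.1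
  obtain ⟨ρ, hρ, rfl⟩ : ∃ ρ ∈ Icc (0 : ℝ) 1, lineMap b c ρ = v := by
    simpa [segment_eq_image_lineMap] using hv.1
  have hh := stdShort_nonneg x y z
  have hh₁ : stdShort x y z ≤ 1 := by simpa using mul_stdShort_le_one (le_max_left _ _)
  have hp := h₁.dist_lineMap_le_two hh hh₁ (mul_stdShort_le_one (le_max_of_le_right
    (le_max_left _ _))) hs hθ hT.1 hu
  have hq := h₂.dist_lineMap_le_two hh hh₁ (mul_stdShort_le_one (le_max_of_le_right
    (le_max_of_le_right (le_max_right _ _)))) ht hρ hT.2.1 hv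
  calc dist (γ₁ s) (γ₂ t)
      ≤ dist (γ₁ s) (lineMap x y θ) + dist (lineMap x y θ) (lineMap y z ρ) +
          dist (lineMap y z ρ) (γ₂ t) := dist_triangle4 _ _ _ _
    _ ≤ dist (lineMap a b θ) (lineMap b c ρ) + 4 := by
      rw [dist_comm (γ₁ s), dist_lineMap_lineMap_eq_of_dist_eq hT.1 hT.2.1 hT.2.2]
      linarith

theorem cat0CN_of_innerProductSpace : CAT0CN V := by
  intro x y z m hym hmz
  rw [eq_midpoint_of_dist_eq_half hym hmz]
  have hApollonius :=
    EuclideanGeometry.dist_sq_add_dist_sq_eq_two_mul_dist_midpoint_sq_add_half_dist_sq x y z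
  linarith

end InnerProductSpace

theorem le_of_forall_pos_mul_le_mul_add {a b C : ℝ} (h : ∀ R > 0, R * a ≤ R * b + C) :
    a ≤ b := by
  by_contra! hba
  set R := (|C| + 1) / (a - b)
  have hR : R * (a - b) = |C| + 1 := div_mul_cancel₀ _ (sub_pos.2 hba).ne'
  linarith [h R (by positivity), le_abs_self C]

section NormedSpace

variable {V : Type*} [NormedAddCommGroup V] [NormedSpace ℝ V]

theorem isShortSegment_lineMap (x y : V) {h : ℝ} (hh : 0 ≤ h) :
    IsShortSegment (lineMap x y : ℝ → V) x y 1 h := by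
  refine ⟨zero_le_one, lineMap_continuous.continuousOn, lineMap_apply_zero x y,
    lineMap_apply_one x y, ?_⟩
  have hid : eVariationOn (fun t : ℝ => t) (Icc 0 1) = ENNReal.ofReal 1 := by
    have := (monotoneOn_id (s := Icc (0 : ℝ) 1)).eVariationOn_eq
      (left_mem_Icc.2 zero_le_one) (right_mem_Icc.2 zero_le_one)
    simp only [inter_self, id_eq, sub_zero] at this
    exact this
  calc eVariationOn (lineMap x y : ℝ → V) (Icc 0 1)
      ≤ nndist x y * eVariationOn (fun t : ℝ => t) (Icc 0 1) :=
        ((lipschitzWith_lineMap x y).lipschitzOnWith (s := univ)).comp_eVariationOn_le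
          (mapsTo_univ _ _)
    _ ≤ ENNReal.ofReal (dist x y + h) := by
      rw [hid, ENNReal.ofReal_one, mul_one, ← ENNReal.ofReal_coe_nnreal, coe_nndist]
      exact ENNReal.ofReal_le_ofReal (le_add_of_nonneg_right hh)

theorem isComparisonPoint_lineMap {x y : V} {a b : EuclideanSpace ℝ (Fin 2)}
    (hab : dist a b = dist x y) {t : ℝ} (ht : t ∈ Icc (0 : ℝ) 1) :
    IsComparisonPoint (lineMap x y : ℝ → V) 1 t a b (lineMap a b t) := by
  have hγ := isShortSegment_lineMap x y le_rfl
  refine ⟨segment_eq_image_lineMap ℝ a b ▸ mem_image_of_mem _ ht, ?_, ?_⟩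
  · rw [dist_left_lineMap, hab, ← dist_left_lineMap]
    exact hγ.ofReal_dist_left_le ht.1
  · rw [dist_lineMap_right, hab, ← dist_lineMap_right]
    exact hγ.ofReal_dist_right_le ht.2

theorem RCAT0.dist_lineMap_lineMap_le {C : ℝ} (H : RCAT0 V C) {x y z : V}
    {a b c : EuclideanSpace ℝ (Fin 2)} (hT : IsComparisonTriangle x y z a b c) {θ ρ : ℝ}
    (hθ : θ ∈ Icc (0 : ℝ) 1) (hρ : ρ ∈ Icc (0 : ℝ) 1) :
    dist (lineMap x y θ) (lineMap y z ρ) ≤ dist (lineMap a b θ) (lineMap b c ρ) + C :=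
  have hh := stdShort_nonneg x y z
  H x y z _ _ _ 1 1 1 (isShortSegment_lineMap x y hh) (isShortSegment_lineMap y z hh)
    (isShortSegment_lineMap z x hh) a b c hT θ hθ ρ hρ _ _ (isComparisonPoint_lineMap hT.1 hθ)
    (isComparisonPoint_lineMap hT.2.1 hρ)

theorem IsComparisonTriangle.smul {x y z : V} {a b c : EuclideanSpace ℝ (Fin 2)}
    (hT : IsComparisonTriangle x y z a b c) (R : ℝ) :
    IsComparisonTriangle (R • x) (R • y) (R • z) (R • a) (R • b) (R • c) := by
  simp only [IsComparisonTriangle, dist_smul₀, hT.1, hT.2.1, hT.2.2, and_self]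

theorem RCAT0.two_mul_dist_midpoint_sq_add_le {C : ℝ} (H : RCAT0 V C) (x y z : V) :
    2 * dist x (midpoint ℝ y z) ^ 2 + dist y z ^ 2 / 2 ≤ dist x y ^ 2 + dist x z ^ 2 := by
  obtain ⟨a, b, c, hT⟩ := exists_isComparisonTriangle x y z
  have hmedian : dist x (midpoint ℝ y z) ≤ dist a (midpoint ℝ b c) := by
    refine le_of_forall_pos_mul_le_mul_add (C := C) fun R hR => ?_
    have := H.dist_lineMap_lineMap_le (hT.smul R) (θ := 0) (ρ := 1 / 2) (by norm_num)
      (by norm_num)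
    simpa only [lineMap_apply_zero, lineMap_one_half, midpoint_eq_smul_add, ← smul_add,
      smul_comm (⅟2 : ℝ) R, dist_smul₀, Real.norm_of_nonneg hR.le] using this
  have hApollonius :=
    EuclideanGeometry.dist_sq_add_dist_sq_eq_two_mul_dist_midpoint_sq_add_half_dist_sq a b c
  rw [hT.1, dist_comm a c, hT.2.2, hT.2.1, dist_comm z x] at hApollonius
  nlinarith [pow_le_pow_left₀ dist_nonneg hmedian 2]

theorem CAT0CN.two_mul_dist_midpoint_sq_add_le (H : CAT0CN V) (x y z : V) :
    2 * dist x (midpoint ℝ y z) ^ 2 + dist y z ^ 2 / 2 ≤ dist x y ^ 2 + dist x z ^ 2 :=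
  H x y z _ (by simp [dist_left_midpoint (𝕜 := ℝ), div_eq_inv_mul])
    (by simp [dist_midpoint_right (𝕜 := ℝ), div_eq_inv_mul])

theorem parallelogram_law_of_two_mul_dist_midpoint_sq_add_le
    (H : ∀ x y z : V, 2 * dist x (midpoint ℝ y z) ^ 2 + dist y z ^ 2 / 2 ≤
      dist x y ^ 2 + dist x z ^ 2) (q r : V) :
    ‖q + r‖ * ‖q + r‖ + ‖q - r‖ * ‖q - r‖ = 2 * (‖q‖ * ‖q‖ + ‖r‖ * ‖r‖) := by
  have h₁ := H r q (-q)
  have h₂ := H 0 ((2 : ℝ) • q) ((2 : ℝ) • r)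
  have m₁ : midpoint ℝ q (-q) = 0 := by simp [midpoint_eq_smul_add]
  have m₂ : midpoint ℝ ((2 : ℝ) • q) ((2 : ℝ) • r) = q + r := by
    rw [midpoint_eq_smul_add, ← smul_add, smul_smul]; norm_num
  rw [m₁] at h₁
  rw [m₂] at h₂
  simp only [dist_eq_norm, ← smul_sub, sub_neg_eq_add, sub_zero, zero_sub, norm_neg,
    ← two_smul ℝ q, norm_smul, Real.norm_two, norm_sub_rev r q, add_comm r q] at h₁ h₂
  nlinarith

theorem RCAT0.cat0CN {C : ℝ} (H : RCAT0 V C) : CAT0CN V := by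
  let := InnerProductSpace.ofNorm ℝ
    (parallelogram_law_of_two_mul_dist_midpoint_sq_add_le H.two_mul_dist_midpoint_sq_add_le)
  exact cat0CN_of_innerProductSpace

theorem CAT0CN.rcat0 (H : CAT0CN V) : RCAT0 V 4 := by
  let := InnerProductSpace.ofNorm ℝ
    (parallelogram_law_of_two_mul_dist_midpoint_sq_add_le H.two_mul_dist_midpoint_sq_add_le)
  exact rcat0_of_innerProductSpace

end NormedSpace

/-- Proposition 5.13: a normed real vector space which is `C`-rCAT(0) for some
`C > 0` is CAT(0); consequently it is rCAT(0) if and only if it is CAT(0). -/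
theorem rough_cat_stmt_15 (V : Type*) [NormedAddCommGroup V]
    [NormedSpace ℝ V] :
    (∀ C : ℝ, 0 < C → RCAT0 V C → CAT0CN V) ∧
    ((∃ C : ℝ, 0 < C ∧ RCAT0 V C) ↔ CAT0CN V) :=
  ⟨fun _ _ H => H.cat0CN, fun ⟨_, _, H⟩ => H.cat0CN, fun H => ⟨4, by norm_num, H.rcat0⟩⟩
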